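/- The coordinatewise Hopf map carries the complex Stiefel manifold V₂(ℂⁿ) into Pol₃(n): let n ≥ 1 and let a, b : Fin n → ℂ satisfy ∑ᵢ |aᵢ|² = 1, ∑ᵢ |bᵢ|² = 1, and ∑ᵢ aᵢ · conj(bᵢ) = 0. For each i let qᵢ ∈ ℍ be the quaternion qᵢ = Re(aᵢ) + Im(aᵢ) i + Re(bᵢ) j + Im(bᵢ) k. Then ∑ᵢ (star qᵢ) * i * qᵢ = 0 and ∑ᵢ ‖(star qᵢ) * i * qᵢ‖ = 2; that is, the purely imaginary quaternions Hopf(qᵢ), viewed as vectors in ℝ³, form a closed n-gon of total length 2. -/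

import Mathlib

/-!
Identify `ℂ²` with `ℍ` by `(a, b) ↦ a + b j`. A direct computation gives
`Hopf(a + b j) = (|a|² - |b|²) i + 2 i (ā b) j`, which is additive in the Gram data
`|a|², |b|², ā b` of the pair, while `‖Hopf q‖ = ‖q‖² = |a|² + |b|²`. Summing over the
coordinates, orthonormality of `(a, b)` makes the sum vanish and the lengths add up to `2`.
-/

def quatI : Quaternion ℝ := ⟨0, 1, 0, 0⟩

open Finset ComplexConjugate Complex

/-- The point `a + b j` of `ℍ`. -/
def quatOfComplexPair (a b : ℂ) : Quaternion ℝ := ⟨a.re, a.im, b.re, b.im⟩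

section quatOfComplexPair

variable (a b : ℂ)

@[simp] theorem re_quatOfComplexPair : (quatOfComplexPair a b).re = a.re := rfl

@[simp] theorem imI_quatOfComplexPair : (quatOfComplexPair a b).imI = a.im := rfl

@[simp] theorem imJ_quatOfComplexPair : (quatOfComplexPair a b).imJ = b.re := rfl

@[simp] theorem imK_quatOfComplexPair : (quatOfComplexPair a b).imK = b.im := rfl

theorem quatOfComplexPair_zero : quatOfComplexPair 0 0 = 0 := rfl

theorem quatOfComplexPair_add (c d : ℂ) :
    quatOfComplexPair (a + c) (b + d) = quatOfComplexPair a b + quatOfComplexPair c d := rfl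

theorem sum_quatOfComplexPair {ι : Type*} (s : Finset ι) (a b : ι → ℂ) :
    ∑ i ∈ s, quatOfComplexPair (a i) (b i) =
      quatOfComplexPair (∑ i ∈ s, a i) (∑ i ∈ s, b i) := by
  induction s using Finset.cons_induction with
  | empty => exact quatOfComplexPair_zero.symm
  | cons i s hi ih => rw [sum_cons, sum_cons, sum_cons, ih, quatOfComplexPair_add]

theorem sq_norm_quatOfComplexPair : ‖quatOfComplexPair a b‖ ^ 2 = ‖a‖ ^ 2 + ‖b‖ ^ 2 := by
  rw [sq, ← Quaternion.normSq_eq_norm_mul_self, Quaternion.normSq_def', Complex.sq_norm,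
    Complex.sq_norm, normSq_apply, normSq_apply]
  simp only [re_quatOfComplexPair, imI_quatOfComplexPair, imJ_quatOfComplexPair,
    imK_quatOfComplexPair]
  ring

theorem star_mul_quatI_mul_quatOfComplexPair :
    star (quatOfComplexPair a b) * quatI * quatOfComplexPair a b =
      quatOfComplexPair (I * (‖a‖ ^ 2 - ‖b‖ ^ 2 : ℝ)) (2 * I * (conj a * b)) := by
  -- `quatI` is unfolded only in the second pass: its `⟨…⟩` form is not seen as a `Quaternion ℝ`.
  ext <;> simp [-ofReal_pow] <;>
    simp [quatI, Complex.sq_norm, normSq_apply, -ofReal_pow] <;> ring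

end quatOfComplexPair

theorem norm_quatI : ‖quatI‖ = 1 := by
  rw [← pow_left_inj₀ (norm_nonneg _) zero_le_one two_ne_zero, sq,
    ← Quaternion.normSq_eq_norm_mul_self, Quaternion.normSq_def']
  simp [quatI]

theorem norm_star_mul_quatI_mul (q : Quaternion ℝ) : ‖star q * quatI * q‖ = ‖q‖ ^ 2 := by
  rw [norm_mul, norm_mul, Quaternion.norm_star, norm_quatI, mul_one, sq]

open Finset in
theorem hopf_stiefel_to_Pol3_general (n : ℕ) (a b : Fin n → ℂ)
    (ha : ∑ i, ‖a i‖ ^ 2 = 1)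
    (hb : ∑ i, ‖b i‖ ^ 2 = 1)
    (hab : ∑ i, a i * (starRingEnd ℂ) (b i) = 0)
    (q : Fin n → Quaternion ℝ)
    (hq : ∀ i, q i = ⟨(a i).re, (a i).im, (b i).re, (b i).im⟩) :
    ∑ i, star (q i) * quatI * q i = 0 ∧ ∑ i, ‖star (q i) * quatI * q i‖ = 2 := by
  obtain rfl : q = fun i ↦ quatOfComplexPair (a i) (b i) := funext hq
  have hba : ∑ i, conj (a i) * b i = 0 := by
    simpa [mul_comm] using congrArg conj hab
  constructor
  · simp only [star_mul_quatI_mul_quatOfComplexPair, sum_quatOfComplexPair, ← mul_sum,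
      ← ofReal_sum, sum_sub_distrib, ha, hb, hba]
    simpa using quatOfComplexPair_zero
  · simp only [norm_star_mul_quatI_mul, sq_norm_quatOfComplexPair, sum_add_distrib, ha, hb]
    norm_num

open Finset in
/-- The coordinatewise Hopf map carries the complex Stiefel manifold `V₂(ℂⁿ)` into
`Pol₃(n)`: if `(a, b)` is a pair of Hermitian-orthonormal vectors in `ℂⁿ` and
`qᵢ = Re(aᵢ) + Im(aᵢ) i + Re(bᵢ) j + Im(bᵢ) k`, then the purely imaginary quaternions
`Hopf(qᵢ) = (star qᵢ) * i * qᵢ` form a closed `n`-gon of total length `2`. -/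
theorem hopf_stiefel_to_Pol3 (n : ℕ) (hn : 1 ≤ n) (a b : Fin n → ℂ)
    (ha : ∑ i, ‖a i‖ ^ 2 = 1)
    (hb : ∑ i, ‖b i‖ ^ 2 = 1)
    (hab : ∑ i, a i * (starRingEnd ℂ) (b i) = 0)
    (q : Fin n → Quaternion ℝ)
    (hq : ∀ i, q i = ⟨(a i).re, (a i).im, (b i).re, (b i).im⟩) :
    ∑ i, star (q i) * quatI * q i = 0 ∧ ∑ i, ‖star (q i) * quatI * q i‖ = 2 :=
  hopf_stiefel_to_Pol3_general n a b ha hb hab q hq
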